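/- Let f : ℝⁿ → ℝ ∪ {+∞} be lower semicontinuous with u ∈ (dom f)^∞ ∩ 𝕊. Then ∂f(∞;u) ∪ (∂^∞f(∞;u) \ {0}) ≠ ∅; that is, either the limiting subdifferential of f at infinity in direction u is nonempty, or the singular subdifferential of f at infinity in direction u contains a nonzero vector. -/

import Mathlib

open Filter Topology Set
open scoped RealInnerProductSpace Pointwise

noncomputable section

/-- `ℝⁿ` with the Euclidean structure. -/
abbrev Eu (n : ℕ) := EuclideanSpace ℝ (Fin n)

/-- `x_k →ᵘ ∞` : `‖x_k‖ → ∞` and `x_k / ‖x_k‖ → u`. -/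
def TendstoDirInfty {n : ℕ} (x : ℕ → Eu n) (u : Eu n) : Prop :=
  Tendsto (fun k => ‖x k‖) atTop atTop ∧
  Tendsto (fun k => ‖x k‖⁻¹ • x k) atTop (𝓝 u)

/-- The asymptotic cone of `D`: all `u` such that `x_k / t_k → u` for some
`t_k → +∞` and `x_k ∈ D`. -/
def asymptoticConeSeq {n : ℕ} (D : Set (Eu n)) : Set (Eu n) :=
  {u | ∃ (t : ℕ → ℝ) (x : ℕ → Eu n), Tendsto t atTop atTop ∧ (∀ k, x k ∈ D) ∧
      Tendsto (fun k => (t k)⁻¹ • x k) atTop (𝓝 u)}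

/-- The Euclidean norm of `p ∈ ℝⁿ × ℝ`. -/
def pnorm {n : ℕ} (p : Eu n × ℝ) : ℝ := Real.sqrt (‖p.1‖ ^ 2 + p.2 ^ 2)

/-- The Euclidean inner product on `ℝⁿ × ℝ`. -/
def pinner {n : ℕ} (v p : Eu n × ℝ) : ℝ := ⟪v.1, p.1⟫ + v.2 * p.2

/-- The Fréchet (regular) normal cone to `S ⊆ ℝⁿ × ℝ` at `q` (empty when `q ∉ S`). -/
def frechetNCP {n : ℕ} (S : Set (Eu n × ℝ)) (q : Eu n × ℝ) : Set (Eu n × ℝ) :=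
  {w | q ∈ S ∧ ∀ ε > 0, ∃ δ > 0, ∀ p ∈ S, pnorm (p - q) < δ →
        pinner w (p - q) ≤ ε * pnorm (p - q)}

/-- Epigraph of `f : ℝⁿ → ℝ ∪ {+∞}`. -/
def epigraph {n : ℕ} (f : Eu n → EReal) : Set (Eu n × ℝ) := {p | f p.1 ≤ (p.2 : EReal)}

/-- The limiting subdifferential of `f` in direction `u` at infinity:
`ξ` with `(ξ_k, -s_k) ∈ N̂((x_k, r_k); epi f)`, `r_k ≥ f(x_k)`, `x_k →ᵘ ∞`,
`(ξ_k, -s_k) → (ξ, -1)`. -/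
def dirSubdiffInfty {n : ℕ} (f : Eu n → EReal) (u : Eu n) : Set (Eu n) :=
  {ξ | ∃ (x : ℕ → Eu n) (r : ℕ → ℝ) (w : ℕ → Eu n × ℝ),
      TendstoDirInfty x u ∧ (∀ k, f (x k) ≤ ((r k : ℝ) : EReal)) ∧
      (∀ k, w k ∈ frechetNCP (epigraph f) (x k, r k)) ∧
      Tendsto w atTop (𝓝 (ξ, (-1 : ℝ)))}

/-- The singular subdifferential of `f` in direction `u` at infinity. -/
def dirSingSubdiffInfty {n : ℕ} (f : Eu n → EReal) (u : Eu n) : Set (Eu n) :=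
  {ξ | ∃ (x : ℕ → Eu n) (r : ℕ → ℝ) (w : ℕ → Eu n × ℝ),
      TendstoDirInfty x u ∧ (∀ k, f (x k) ≤ ((r k : ℝ) : EReal)) ∧
      (∀ k, w k ∈ frechetNCP (epigraph f) (x k, r k)) ∧
      Tendsto w atTop (𝓝 (ξ, (0 : ℝ)))}

section Helpers

variable {n : ℕ}

lemma pnorm_nonneg' (p : Eu n × ℝ) : 0 ≤ pnorm p := Real.sqrt_nonneg _

lemma norm_fst_le_pnorm (p : Eu n × ℝ) : ‖p.1‖ ≤ pnorm p := by
  have h := Real.sqrt_le_sqrt (show ‖p.1‖ ^ 2 ≤ ‖p.1‖ ^ 2 + p.2 ^ 2 by nlinarith [sq_nonneg p.2])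
  rwa [Real.sqrt_sq (norm_nonneg _)] at h

lemma abs_snd_le_pnorm (p : Eu n × ℝ) : |p.2| ≤ pnorm p := by
  have h := Real.sqrt_le_sqrt (show p.2 ^ 2 ≤ ‖p.1‖ ^ 2 + p.2 ^ 2 by nlinarith [sq_nonneg ‖p.1‖])
  rwa [Real.sqrt_sq_eq_abs] at h

lemma smul_mem_frechetNCP {S : Set (Eu n × ℝ)} {q w : Eu n × ℝ}
    (hw : w ∈ frechetNCP S q) {c : ℝ} (hc : 0 < c) : c • w ∈ frechetNCP S q := by
  obtain ⟨hq, h⟩ := hw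
  refine ⟨hq, fun ε hε => ?_⟩
  obtain ⟨δ, hδ, h2⟩ := h (ε / c) (by positivity)
  refine ⟨δ, hδ, fun p hp hd => ?_⟩
  have h3 := h2 p hp hd
  have hpn := pnorm_nonneg' (p - q)
  have h4 : pinner (c • w) (p - q) = c * pinner w (p - q) := by
    unfold pinner
    rw [Prod.smul_fst, Prod.smul_snd, real_inner_smul_left, smul_eq_mul]; ring
  rw [h4]
  calc c * pinner w (p - q) ≤ c * (ε / c * pnorm (p - q)) :=
        mul_le_mul_of_nonneg_left h3 hc.le
    _ = ε * pnorm (p - q) := by field_simp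

lemma isClosed_epi {f : Eu n → EReal} (hf : LowerSemicontinuous f) :
    IsClosed (epigraph f) := by
  have h1 : IsClosed {p : Eu n × EReal | f p.1 ≤ p.2} := hf.isClosed_epigraph
  have h2 : epigraph f =
      (fun p : Eu n × ℝ => (p.1, (p.2 : EReal))) ⁻¹' {p : Eu n × EReal | f p.1 ≤ p.2} := rfl
  rw [h2]
  exact h1.preimage (continuous_fst.prodMk (continuous_coe_real_ereal.comp continuous_snd))

lemma exists_lb (f : Eu n → EReal) (hf : LowerSemicontinuous f) (hfbot : ∀ x, f x ≠ ⊥)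
    {B : Set (Eu n)} (hB : IsCompact B) : ∃ c : ℝ, ∀ y ∈ B, (c : EReal) ≤ f y := by
  by_contra h
  push_neg at h
  have hseq : ∀ j : ℕ, ∃ y ∈ B, f y < ((-(j : ℝ) : ℝ) : EReal) := fun j => h (-(j : ℝ))
  choose y hyB hylt using hseq
  obtain ⟨z, hzB, φ, hφ, hconv⟩ := hB.tendsto_subseq hyB
  obtain ⟨c, _, hc2⟩ := EReal.exists_between_coe_real (Ne.bot_lt (hfbot z))
  have hev : ∀ᶠ j in atTop, (c : EReal) < f (y (φ j)) := hconv.eventually (hf z c hc2)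
  have hev2 : ∀ᶠ j : ℕ in atTop, -c ≤ (j : ℝ) := tendsto_natCast_atTop_atTop.eventually_ge_atTop (-c)
  obtain ⟨j, h1, h2⟩ := (hev.and hev2).exists
  have h3 : ((-(φ j : ℝ) : ℝ) : EReal) ≤ ((c : ℝ) : EReal) := by
    have hφj : -c ≤ (φ j : ℝ) := le_trans h2 (by exact_mod_cast hφ.le_apply)
    exact EReal.coe_le_coe_iff.mpr (by linarith)
  exact absurd (lt_trans h1 (lt_of_lt_of_le (hylt (φ j)) h3)) (lt_irrefl _)

lemma tendstoDirInfty_of {t : ℕ → ℝ} {y : ℕ → Eu n} {u : Eu n} (hu : ‖u‖ = 1)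
    (ht : Tendsto t atTop atTop) (hc : Tendsto (fun k => (t k)⁻¹ • y k) atTop (𝓝 u)) :
    TendstoDirInfty y u := by
  set g : ℕ → Eu n := fun k => (t k)⁻¹ • y k with hg
  have hgn : Tendsto (fun k => ‖g k‖) atTop (𝓝 1) := by
    have := hc.norm; rwa [hu] at this
  have htpos : ∀ᶠ k in atTop, 0 < t k := ht.eventually_gt_atTop 0
  have hyn : ∀ᶠ k in atTop, t k * ‖g k‖ = ‖y k‖ := by
    filter_upwards [htpos] with k hk
    rw [hg]
    simp only [norm_smul, norm_inv, Real.norm_eq_abs, abs_of_pos hk]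
    field_simp
  have h1 : Tendsto (fun k => t k * ‖g k‖) atTop atTop := ht.atTop_mul_pos one_pos hgn
  constructor
  · exact h1.congr' hyn
  · have hcont : ContinuousAt (fun z : Eu n => ‖z‖⁻¹ • z) u :=
      ((continuous_norm.continuousAt).inv₀ (by simp [hu])).smul continuousAt_id
    have hlim : Tendsto (fun k => ‖g k‖⁻¹ • g k) atTop (𝓝 u) := by
      have := hcont.tendsto.comp hc
      simpa [hu, Function.comp_def] using this
    refine hlim.congr' ?_
    filter_upwards [htpos] with k hk
    rw [hg]
    simp only [norm_smul, norm_inv, Real.norm_eq_abs, abs_of_pos hk, mul_inv, inv_inv,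
      smul_smul]
    congr 1
    rw [mul_comm]
    field_simp

end Helpers

set_option maxHeartbeats 1000000 in
lemma keylemma {n : ℕ} (f : Eu n → EReal) (hf : LowerSemicontinuous f) (hfbot : ∀ x, f x ≠ ⊥)
    (x₀ : Eu n) (hx₀ : f x₀ < ⊤) :
    ∃ (y : Eu n) (r : ℝ) (ξ : Eu n), ‖y - x₀‖ ≤ 1 ∧ f y ≤ ((r : ℝ) : EReal) ∧
      (ξ, (-1 : ℝ)) ∈ frechetNCP (epigraph f) (y, r) := by
  obtain ⟨mr, hmr⟩ := exists_lb f hf hfbot (isCompact_closedBall x₀ 1)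
  set r₀ := (f x₀).toReal with hr₀
  have hfx₀ : ((r₀ : ℝ) : EReal) = f x₀ := EReal.coe_toReal hx₀.ne (hfbot x₀)
  have hmr₀ : mr ≤ r₀ := by
    have h := hmr x₀ (Metric.mem_closedBall_self one_pos.le)
    rw [← hfx₀] at h
    exact_mod_cast h
  set lam := r₀ - mr + 1 with hlam_def
  have hlam : 1 ≤ lam := by linarith
  have hlam0 : 0 < lam := by linarith
  set B := Metric.closedBall x₀ 1 with hB
  set S := epigraph f ∩ (B ×ˢ Icc (mr - 1) (r₀ + 1)) with hS_def
  have hSc : IsCompact S :=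
    ((isCompact_closedBall x₀ 1).prod isCompact_Icc).inter_left (isClosed_epi hf)
  have hx₀S : (x₀, r₀) ∈ S := by
    refine ⟨?_, Metric.mem_closedBall_self one_pos.le, ⟨by linarith, by linarith⟩⟩
    exact le_of_eq hfx₀.symm
  have hne : S.Nonempty := ⟨(x₀, r₀), hx₀S⟩
  set ψ : Eu n × ℝ → ℝ := fun p => p.2 + lam * ‖p.1 - x₀‖ ^ 2 with hψ
  have hψc : Continuous ψ :=
    continuous_snd.add (continuous_const.mul (((continuous_fst.sub continuous_const).norm).pow 2))
  obtain ⟨q, hqS, hqmin⟩ := hSc.exists_isMinOn hne hψc.continuousOn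
  obtain ⟨hq_epi, hq_B, hq_I⟩ := hqS
  have hmin := isMinOn_iff.mp hqmin
  have hmrq : mr ≤ q.2 := by
    have h1 : ((mr : ℝ) : EReal) ≤ ((q.2 : ℝ) : EReal) := le_trans (hmr q.1 hq_B) hq_epi
    exact_mod_cast h1
  have hmin₀ : q.2 + lam * ‖q.1 - x₀‖ ^ 2 ≤ r₀ := by
    have h := hmin (x₀, r₀) hx₀S
    simpa [hψ] using h
  have hnn : (0:ℝ) ≤ ‖q.1 - x₀‖ := norm_nonneg _
  have hq_near : ‖q.1 - x₀‖ < 1 := by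
    by_contra hcon
    push_neg at hcon
    have hsq : 1 ≤ ‖q.1 - x₀‖ ^ 2 := by nlinarith
    have h1 := mul_le_mul_of_nonneg_left hsq hlam0.le
    linarith
  have hq2_le : q.2 ≤ r₀ := by nlinarith
  refine ⟨q.1, q.2, (2 * lam) • (x₀ - q.1), ?_, hq_epi, ?_⟩
  · have : q.1 ∈ B := hq_B
    rw [hB, Metric.mem_closedBall, dist_eq_norm] at this
    exact this
  refine ⟨hq_epi, fun ε hε => ?_⟩
  refine ⟨min (min (1 - ‖q.1 - x₀‖) 1) (ε / lam),
    lt_min (lt_min (by linarith) one_pos) (div_pos hε hlam0), fun p hp hd => ?_⟩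
  set δ := min (min (1 - ‖q.1 - x₀‖) 1) (ε / lam) with hδdef
  set P := pnorm (p - (q.1, q.2)) with hP
  have hP0 : 0 ≤ P := pnorm_nonneg' _
  have hfst : (p - (q.1, q.2)).1 = p.1 - q.1 := rfl
  have hsnd : (p - (q.1, q.2)).2 = p.2 - q.2 := rfl
  have hna : ‖p.1 - q.1‖ ≤ P := by
    have := norm_fst_le_pnorm (p - (q.1, q.2)); rwa [hfst] at this
  have hnb : |p.2 - q.2| ≤ P := by
    have := abs_snd_le_pnorm (p - (q.1, q.2)); rwa [hsnd] at this
  have hδ1 : δ ≤ 1 - ‖q.1 - x₀‖ := le_trans (min_le_left _ _) (min_le_left _ _)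
  have hδ2 : δ ≤ 1 := le_trans (min_le_left _ _) (min_le_right _ _)
  have hδ3 : δ ≤ ε / lam := min_le_right _ _
  have hp1B : p.1 ∈ B := by
    rw [hB, Metric.mem_closedBall, dist_eq_norm]
    calc ‖p.1 - x₀‖ = ‖(p.1 - q.1) + (q.1 - x₀)‖ := by rw [sub_add_sub_cancel]
      _ ≤ ‖p.1 - q.1‖ + ‖q.1 - x₀‖ := norm_add_le _ _
      _ ≤ 1 := by
          have : ‖p.1 - q.1‖ < δ := lt_of_le_of_lt hna hd
          linarith
  have habs := abs_le.mp hnb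
  have hp2I : p.2 ∈ Icc (mr - 1) (r₀ + 1) := by
    constructor
    · have : P < δ := hd
      have := habs.1
      linarith
    · have : P < δ := hd
      have := habs.2
      linarith
  have hpS : p ∈ S := ⟨hp, hp1B, hp2I⟩
  have hminp := hmin p hpS
  simp only [hψ] at hminp
  have hexp : ‖p.1 - x₀‖ ^ 2 =
      ‖p.1 - q.1‖ ^ 2 + 2 * ⟪p.1 - q.1, q.1 - x₀⟫ + ‖q.1 - x₀‖ ^ 2 := by
    rw [show p.1 - x₀ = (p.1 - q.1) + (q.1 - x₀) by abel]
    exact norm_add_sq_real _ _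
  have hpin : pinner ((2 * lam) • (x₀ - q.1), (-1 : ℝ)) (p - (q.1, q.2)) =
      -(2 * lam) * ⟪p.1 - q.1, q.1 - x₀⟫ - (p.2 - q.2) := by
    unfold pinner
    rw [hfst, hsnd, real_inner_smul_left]
    rw [show x₀ - q.1 = -(q.1 - x₀) by abel, inner_neg_left,
      real_inner_comm]
    ring
  rw [hpin]
  have hkey : -(2 * lam) * ⟪p.1 - q.1, q.1 - x₀⟫ - (p.2 - q.2) ≤ lam * ‖p.1 - q.1‖ ^ 2 := by
    nlinarith [hminp, hexp]
  have hfin : lam * ‖p.1 - q.1‖ ^ 2 ≤ ε * P := by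
    have h1 : ‖p.1 - q.1‖ < δ := lt_of_le_of_lt hna hd
    have h2 : δ * lam ≤ ε := by
      rw [← le_div_iff₀ hlam0] at *
      exact hδ3
    have h3 : 0 ≤ ‖p.1 - q.1‖ := norm_nonneg _
    have h4 : lam * ‖p.1 - q.1‖ ≤ ε := by
      have h6 := mul_le_mul_of_nonneg_left h1.le hlam0.le
      linarith
    have h5 := mul_le_mul h4 hna h3 hε.le
    calc lam * ‖p.1 - q.1‖ ^ 2 = lam * ‖p.1 - q.1‖ * ‖p.1 - q.1‖ := by ring
      _ ≤ ε * P := h5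
  linarith

/-- Nonemptiness: `∂f(∞; u) ∪ (∂^∞f(∞; u) \ {0}) ≠ ∅`. -/
theorem dirSubdiffInfty_union_nonempty {n : ℕ} (f : Eu n → EReal)
    (hf : LowerSemicontinuous f) (hfbot : ∀ x, f x ≠ ⊥)
    (u : Eu n) (hu1 : ‖u‖ = 1) (hdom : u ∈ asymptoticConeSeq {x | f x < ⊤}) :
    (dirSubdiffInfty f u ∪ (dirSingSubdiffInfty f u \ {0})).Nonempty := by
  obtain ⟨t, x, ht, hx, hconv⟩ := hdom
  have H : ∀ k, ∃ y r ξ, ‖y - x k‖ ≤ 1 ∧ f y ≤ ((r : ℝ) : EReal) ∧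
      (ξ, (-1 : ℝ)) ∈ frechetNCP (epigraph f) (y, r) :=
    fun k => keylemma f hf hfbot (x k) (hx k)
  choose y r ξ hnear hfy hNCP using H
  have hdiff : Tendsto (fun k => (t k)⁻¹ • (y k - x k)) atTop (𝓝 0) := by
    have habs : Tendsto (fun k => |(t k)⁻¹|) atTop (𝓝 0) := by
      simpa using ht.inv_tendsto_atTop.abs
    refine squeeze_zero_norm (fun k => ?_) habs
    rw [norm_smul, Real.norm_eq_abs]
    calc |(t k)⁻¹| * ‖y k - x k‖ ≤ |(t k)⁻¹| * 1 :=
          mul_le_mul_of_nonneg_left (hnear k) (abs_nonneg _)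
      _ = |(t k)⁻¹| := mul_one _
  have hyconv : Tendsto (fun k => (t k)⁻¹ • y k) atTop (𝓝 u) := by
    have heq : (fun k => (t k)⁻¹ • y k) =
        fun k => (t k)⁻¹ • x k + (t k)⁻¹ • (y k - x k) := by
      funext k; rw [← smul_add]; congr 1; abel
    rw [heq]
    simpa using hconv.add hdiff
  have hyinf : TendstoDirInfty y u := tendstoDirInfty_of hu1 ht hyconv
  by_cases hbdd : ∃ c : ℝ, ∃ᶠ k in atTop, ‖ξ k‖ ≤ c
  · obtain ⟨c, hc⟩ := hbdd
    obtain ⟨φ, hφ, hφc⟩ := Filter.extraction_of_frequently_atTop hc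
    obtain ⟨xi0, _, ψ, hψ, hψc⟩ := (isCompact_closedBall (0 : Eu n) c).tendsto_subseq
      (x := fun j => ξ (φ j)) (fun j => by
        rw [mem_closedBall_zero_iff]; exact hφc j)
    have hσ : StrictMono (fun j => φ (ψ j)) := hφ.comp hψ
    refine ⟨xi0, mem_union_left _ ?_⟩
    refine ⟨fun j => y (φ (ψ j)), fun j => r (φ (ψ j)), fun j => (ξ (φ (ψ j)), (-1 : ℝ)),
      ⟨hyinf.1.comp hσ.tendsto_atTop, hyinf.2.comp hσ.tendsto_atTop⟩,
      fun j => hfy _, fun j => hNCP _, ?_⟩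
    exact hψc.prodMk_nhds tendsto_const_nhds
  · have hξtop : Tendsto (fun k => ‖ξ k‖) atTop atTop := by
      refine tendsto_atTop.2 fun b => ?_
      have h1 : ¬ ∃ᶠ k in atTop, ‖ξ k‖ ≤ b := fun hcon => hbdd ⟨b, hcon⟩
      rw [Filter.not_frequently] at h1
      exact h1.mono fun k hk => (not_le.mp hk).le
    set N : ℕ → ℝ := fun k => Real.sqrt (‖ξ k‖ ^ 2 + 1) with hN
    have hN1 : ∀ k, 1 ≤ N k := fun k => by
      have h := Real.sqrt_le_sqrt (show (1 : ℝ) ≤ ‖ξ k‖ ^ 2 + 1 by nlinarith [sq_nonneg ‖ξ k‖])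
      rwa [Real.sqrt_one] at h
    have hN0 : ∀ k, 0 < N k := fun k => lt_of_lt_of_le one_pos (hN1 k)
    have hNξ : ∀ k, ‖ξ k‖ ≤ N k := fun k => by
      have h := Real.sqrt_le_sqrt (show ‖ξ k‖ ^ 2 ≤ ‖ξ k‖ ^ 2 + 1 by linarith)
      rwa [Real.sqrt_sq (norm_nonneg _)] at h
    set v : ℕ → Eu n := fun k => (N k)⁻¹ • ξ k with hv
    have hvB : ∀ k, v k ∈ Metric.closedBall (0 : Eu n) 1 := fun k => by
      rw [mem_closedBall_zero_iff, hv]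
      simp only [norm_smul, norm_inv, Real.norm_eq_abs, abs_of_pos (hN0 k)]
      calc (N k)⁻¹ * ‖ξ k‖ ≤ (N k)⁻¹ * N k :=
            mul_le_mul_of_nonneg_left (hNξ k) (inv_pos.2 (hN0 k)).le
        _ = 1 := inv_mul_cancel₀ (hN0 k).ne'
    obtain ⟨xi0, _, ψ, hψ, hψc⟩ := (isCompact_closedBall (0 : Eu n) 1).tendsto_subseq hvB
    have hNtop : Tendsto N atTop atTop := tendsto_atTop_mono hNξ hξtop
    have hNinv : Tendsto (fun j => (N (ψ j))⁻¹) atTop (𝓝 0) :=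
      (hNtop.comp hψ.tendsto_atTop).inv_tendsto_atTop
    have hvlb : ∀ᶠ k in atTop, (1 : ℝ) / 2 ≤ ‖v k‖ := by
      filter_upwards [hξtop.eventually_ge_atTop 1] with k hk
      rw [hv]
      simp only [norm_smul, norm_inv, Real.norm_eq_abs, abs_of_pos (hN0 k)]
      have hle : N k ≤ 2 * ‖ξ k‖ := by
        have h2 := Real.sqrt_le_sqrt (show ‖ξ k‖ ^ 2 + 1 ≤ (2 * ‖ξ k‖) ^ 2 by nlinarith)
        rwa [Real.sqrt_sq (by positivity)] at h2
      have hinv : (2 * ‖ξ k‖)⁻¹ ≤ (N k)⁻¹ := by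
        apply inv_anti₀ (hN0 k) hle
      have hne0 : ‖ξ k‖ ≠ 0 := by positivity
      have h3 : (2 * ‖ξ k‖)⁻¹ * ‖ξ k‖ = 1 / 2 := by field_simp
      calc (1 : ℝ) / 2 = (2 * ‖ξ k‖)⁻¹ * ‖ξ k‖ := h3.symm
        _ ≤ (N k)⁻¹ * ‖ξ k‖ := mul_le_mul_of_nonneg_right hinv (norm_nonneg _)
    have hxi0 : 1 / 2 ≤ ‖xi0‖ :=
      ge_of_tendsto hψc.norm (hψ.tendsto_atTop.eventually hvlb)
    have hξne : xi0 ≠ 0 := by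
      intro h0; rw [h0, norm_zero] at hxi0; linarith
    refine ⟨xi0, mem_union_right _ ⟨?_, by simpa using hξne⟩⟩
    refine ⟨fun j => y (ψ j), fun j => r (ψ j),
      fun j => (v (ψ j), -(N (ψ j))⁻¹),
      ⟨hyinf.1.comp hψ.tendsto_atTop, hyinf.2.comp hψ.tendsto_atTop⟩,
      fun j => hfy _, fun j => ?_, ?_⟩
    · show ((v (ψ j), -(N (ψ j))⁻¹) : Eu n × ℝ) ∈ frechetNCP (epigraph f) (y (ψ j), r (ψ j))
      have heq : ((v (ψ j), -(N (ψ j))⁻¹) : Eu n × ℝ) =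
          (N (ψ j))⁻¹ • ((ξ (ψ j), (-1 : ℝ)) : Eu n × ℝ) := by
        rw [hv, Prod.smul_mk]
        congr 1
        simp
      rw [heq]
      exact smul_mem_frechetNCP (hNCP _) (inv_pos.2 (hN0 _))
    · refine hψc.prodMk_nhds ?_
      simpa using hNinv.neg
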